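/- Let (Ω, F, P) be a probability space, let N ≥ 1, d_y ≥ 1, d_z ≥ 1, let γ_1, …, γ_N > 0, let w ∈ ℝᴺ, let c ∈ ℝ^{d_y}, and let Z¹, …, Zᴺ : Ω → ℝ^{d_y×d_z} be random matrices with E[‖Zⁱ‖_F²] < ∞ for every i. For a strategy profile β = (β¹, …, βᴺ) ∈ (ℝ^{d_z})ᴺ define the cost of player i by J_i(β) = E[‖c − Σ_{j=1}^N wʲ Zʲ βʲ‖²] + γ_i ‖βⁱ‖². Let S : Ω → ℝ^{d_y × N d_z} be the random block matrix S = [w¹ Z¹, …, wᴺ Zᴺ] and let Γ = diag(γ_1 I_{d_z}, …, γ_N I_{d_z}) ∈ ℝ^{N d_z × N d_z}. Then Γ + E[Sᵀ S] is symmetric positive definite (hence invertible), and the game (J_1, …, J_N) admits exactly one Nash equilibrium β*; moreover the vertical stack of β*¹, …, β*ᴺ in ℝ^{N d_z} equals (Γ + E[Sᵀ S])⁻¹ E[S]ᵀ c. -/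

import Mathlib

open MeasureTheory Matrix

/-!
Stack a profile `β` into `x ∈ ℝ^{N d_z}` and put `M = Γ + E[SᵀS]`, `l = E[S]ᵀ c`. Expanding the
square, `J_i(β) = ‖c‖² + xᵀ E[SᵀS] x − 2 xᵀ l + γ_i ‖βⁱ‖²`, so the game is an exact potential game
with the quadratic potential `Φ(x) = xᵀ M x − 2 xᵀ l`: a unilateral deviation changes `J_i` and `Φ`
by the same amount. `E[SᵀS]` is an average of Gram matrices, hence positive semidefinite, so `M`
is positive definite. A deviation of player `i` by `v` changes `Φ` by `2 vᵀ rⁱ + (quadratic ≥ 0)`,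
where `rⁱ` is the `i`-th block of the gradient `M x − l`; hence `β` is a Nash equilibrium iff every
block of the gradient vanishes, i.e. iff `M x = l`, whose unique solution is `M⁻¹ l`.
-/

def IsNashEquilibrium {ι α : Type*} [DecidableEq ι] (J : (ι → α) → ι → ℝ) (β : ι → α) : Prop :=
  ∀ i b, J β i ≤ J (Function.update β i b) i

def IsExactPotential {ι α : Type*} [DecidableEq ι] (J : (ι → α) → ι → ℝ)
    (Φ : (ι → α) → ℝ) : Prop :=
  ∀ β i b, J (Function.update β i b) i - J β i = Φ (Function.update β i b) - Φ β

def quadraticPotential {n : Type*} [Fintype n] (M : Matrix n n ℝ) (l x : n → ℝ) : ℝ :=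
  x ⬝ᵥ M *ᵥ x - 2 * (x ⬝ᵥ l)

lemma Matrix.IsSymm.quadraticPotential_add_sub {n : Type*} [Fintype n] {M : Matrix n n ℝ}
    (hM : M.IsSymm) (l x d : n → ℝ) :
    quadraticPotential M l (x + d) - quadraticPotential M l x =
      2 * (d ⬝ᵥ (M *ᵥ x - l)) + d ⬝ᵥ M *ᵥ d := by
  have hxd : x ⬝ᵥ M *ᵥ d = d ⬝ᵥ M *ᵥ x := by
    rw [← dotProduct_transpose_mulVec, hM.eq]
  simp only [quadraticPotential, mulVec_add, dotProduct_add, add_dotProduct, dotProduct_sub, hxd]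
  ring

lemma eq_zero_of_forall_nonneg_mul_add {q a : ℝ} (h : ∀ t : ℝ, 0 ≤ q * (t * t) + a * t) :
    a = 0 := by
  have hdisc := discrim_le_zero (K := ℝ) (c := 0) (by simpa using h)
  rw [discrim, mul_zero, sub_zero] at hdisc
  exact pow_eq_zero_iff two_ne_zero |>.mp (le_antisymm hdisc (sq_nonneg a))

lemma Matrix.mulVec_eq_iff_eq_inv_mulVec {n α : Type*} [Fintype n] [DecidableEq n] [CommRing α]
    {A : Matrix n n α} (hA : IsUnit A) {x l : n → α} : A *ᵥ x = l ↔ x = A⁻¹ *ᵥ l := by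
  have := hA.invertible
  exact ⟨fun h => (inv_mulVec_eq_vec h.symm).symm,
    fun h => by rw [h, mulVec_mulVec, mul_inv_of_invertible, one_mulVec]⟩

section BlockCoordinates

variable {ι κ : Type*} [DecidableEq ι]

lemma uncurry_update_add (β : ι → κ → ℝ) (i : ι) (v : κ → ℝ) :
    Function.uncurry (Function.update β i (β i + v)) =
      Function.uncurry β + Function.uncurry (Pi.single i v) := by
  ext ⟨j, p⟩
  rcases eq_or_ne j i with rfl | hj
  · simp
  · simp [hj]

lemma uncurry_single_smul (i : ι) (t : ℝ) (v : κ → ℝ) :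
    Function.uncurry (Pi.single i (t • v)) = t • Function.uncurry (Pi.single i v : ι → κ → ℝ) := by
  ext ⟨j, p⟩
  rcases eq_or_ne j i with rfl | hj
  · simp
  · simp [hj]

variable [Fintype ι] [Fintype κ]

lemma uncurry_single_dotProduct (i : ι) (v : κ → ℝ) (y : ι × κ → ℝ) :
    Function.uncurry (Pi.single i v) ⬝ᵥ y = v ⬝ᵥ fun p => y (i, p) := by
  simp only [dotProduct, Fintype.sum_prod_type, Function.uncurry_apply_pair]
  rw [Finset.sum_eq_single i (fun j _ hj => by simp [hj]) (by simp)]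
  simp

lemma uncurry_dotProduct_diagonal_mulVec [DecidableEq κ] (γ : ι → ℝ) (β : ι → κ → ℝ) :
    Function.uncurry β ⬝ᵥ diagonal (fun ip : ι × κ => γ ip.1) *ᵥ Function.uncurry β =
      ∑ j, γ j * (β j ⬝ᵥ β j) := by
  simp only [mulVec_diagonal, dotProduct, Fintype.sum_prod_type, Function.uncurry_apply_pair,
    Finset.mul_sum]
  exact Finset.sum_congr rfl fun j _ => Finset.sum_congr rfl fun p _ => by ring

end BlockCoordinates

section PotentialGame

variable {ι κ : Type*} [DecidableEq ι] [Fintype ι] [Fintype κ]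
  {J : (ι → κ → ℝ) → ι → ℝ} {M : Matrix (ι × κ) (ι × κ) ℝ} {l : ι × κ → ℝ}

lemma IsExactPotential.forall_le_update_iff (hM : M.PosSemidef)
    (hJ : IsExactPotential J fun β => quadraticPotential M l (Function.uncurry β))
    (β : ι → κ → ℝ) (i : ι) :
    (∀ b, J β i ≤ J (Function.update β i b) i) ↔
      ∀ p, (M *ᵥ Function.uncurry β - l) (i, p) = 0 := by
  set r : κ → ℝ := fun p => (M *ᵥ Function.uncurry β - l) (i, p)
  set d : (κ → ℝ) → ι × κ → ℝ := fun v => Function.uncurry (Pi.single i v)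
  have increment : ∀ v, J (Function.update β i (β i + v)) i - J β i =
      2 * (v ⬝ᵥ r) + d v ⬝ᵥ M *ᵥ d v := by
    intro v
    rw [hJ]
    dsimp only
    rw [uncurry_update_add,
      (isHermitian_iff_isSymm.mp hM.isHermitian).quadraticPotential_add_sub,
      uncurry_single_dotProduct]
  have hq : ∀ v, 0 ≤ d v ⬝ᵥ M *ᵥ d v := fun v => by
    simpa using hM.dotProduct_mulVec_nonneg (d v)
  constructor
  · intro h
    have hr : 2 * (r ⬝ᵥ r) = 0 := by
      refine eq_zero_of_forall_nonneg_mul_add (q := d r ⬝ᵥ M *ᵥ d r) fun t => ?_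
      have := increment (t • r)
      rw [show d (t • r) = t • d r from uncurry_single_smul i t r] at this
      simp only [mulVec_smul, dotProduct_smul, smul_dotProduct, smul_eq_mul] at this
      linarith [h (β i + t • r)]
    intro p
    exact congrFun (dotProduct_self_eq_zero (v := r) |>.mp (by linarith)) p
  · intro h b
    have hr : r = 0 := funext h
    have := increment (b - β i)
    rw [add_sub_cancel, hr, dotProduct_zero] at this
    linarith [hq (b - β i)]

lemma IsExactPotential.isNashEquilibrium_iff (hM : M.PosSemidef)
    (hJ : IsExactPotential J fun β => quadraticPotential M l (Function.uncurry β))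
    (β : ι → κ → ℝ) :
    IsNashEquilibrium J β ↔ M *ᵥ Function.uncurry β = l := by
  simp only [IsNashEquilibrium, hJ.forall_le_update_iff hM, funext_iff, Prod.forall,
    Pi.sub_apply, sub_eq_zero]

end PotentialGame

lemma isExactPotential_of_eq_add_regularizer {ι κ : Type*} [DecidableEq ι] [Fintype ι]
    [DecidableEq κ] [Fintype κ] {J : (ι → κ → ℝ) → ι → ℝ} (G : Matrix (ι × κ) (ι × κ) ℝ)
    (l : ι × κ → ℝ) (γ : ι → ℝ) (C : ℝ)
    (hJ : ∀ β i, J β i = C + quadraticPotential G l (Function.uncurry β) + γ i * (β i ⬝ᵥ β i)) :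
    IsExactPotential J fun β =>
      quadraticPotential (diagonal (fun ip => γ ip.1) + G) l (Function.uncurry β) := by
  intro β i b
  have hsplit : ∀ β : ι → κ → ℝ,
      quadraticPotential (diagonal (fun ip => γ ip.1) + G) l (Function.uncurry β) =
        quadraticPotential G l (Function.uncurry β) + ∑ j, γ j * (β j ⬝ᵥ β j) := by
    intro β
    rw [quadraticPotential, add_mulVec, dotProduct_add, uncurry_dotProduct_diagonal_mulVec,
      quadraticPotential]
    ring
  have hsum : ∑ j, γ j * (Function.update β i b j ⬝ᵥ Function.update β i b j) =
      γ i * (b ⬝ᵥ b) + ∑ j ∈ Finset.univ \ {i}, γ j * (β j ⬝ᵥ β j) := by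
    rw [← Finset.sum_update_of_mem (Finset.mem_univ i)]
    exact Finset.sum_congr rfl fun j _ => Function.apply_update (fun j v => γ j * (v ⬝ᵥ v)) β i b j
  dsimp only
  rw [hJ, hJ, hsplit, hsplit, Function.update_self, hsum,
    Finset.sum_eq_add_sum_sdiff_singleton_of_mem (Finset.mem_univ i)]
  ring

section EntrywiseIntegral

variable {Ω : Type*} [MeasurableSpace Ω] (P : Measure Ω) {m n : Type*}

noncomputable def entrywiseIntegral (A : Ω → Matrix m n ℝ) : Matrix m n ℝ :=
  of fun i j => ∫ ω, A ω i j ∂P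

variable [Fintype m] [Fintype n] {P}

lemma integrable_dotProduct_mulVec {A : Ω → Matrix m n ℝ}
    (hA : ∀ i j, Integrable (fun ω => A ω i j) P) (x : m → ℝ) (y : n → ℝ) :
    Integrable (fun ω => x ⬝ᵥ A ω *ᵥ y) P := by
  simp only [dotProduct, mulVec]
  exact integrable_finsetSum _ fun i _ =>
    (integrable_finsetSum _ fun j _ => (hA i j).mul_const _).const_mul _

lemma integral_dotProduct_mulVec {A : Ω → Matrix m n ℝ}
    (hA : ∀ i j, Integrable (fun ω => A ω i j) P) (x : m → ℝ) (y : n → ℝ) :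
    ∫ ω, x ⬝ᵥ A ω *ᵥ y ∂P = x ⬝ᵥ entrywiseIntegral P A *ᵥ y := by
  simp only [dotProduct, mulVec, entrywiseIntegral, of_apply]
  rw [integral_finsetSum _ fun i _ =>
    (integrable_finsetSum _ fun j _ => (hA i j).mul_const _).const_mul _]
  refine Finset.sum_congr rfl fun i _ => ?_
  rw [integral_const_mul, integral_finsetSum _ fun j _ => (hA i j).mul_const _]
  simp_rw [integral_mul_const]

lemma Matrix.PosSemidef.entrywiseIntegral {A : Ω → Matrix n n ℝ} (hpsd : ∀ ω, (A ω).PosSemidef)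
    (hA : ∀ i j, Integrable (fun ω => A ω i j) P) : (entrywiseIntegral P A).PosSemidef := by
  refine .of_dotProduct_mulVec_nonneg ?_ fun x => ?_
  · refine isHermitian_iff_isSymm.mpr (IsSymm.ext fun i j => ?_)
    simp only [_root_.entrywiseIntegral, of_apply]
    simp_rw [(isHermitian_iff_isSymm.mp (hpsd _).isHermitian).apply i j]
  · rw [star_trivial, ← integral_dotProduct_mulVec hA]
    exact integral_nonneg fun ω => by simpa using (hpsd ω).dotProduct_mulVec_nonneg x

end EntrywiseIntegral

section SecondMoments

variable {Ω : Type*} [MeasurableSpace Ω] {P : Measure Ω} {m n : Type*} [Fintype m]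

lemma integrable_transpose_mul_self_apply {S : Ω → Matrix m n ℝ}
    (hS : ∀ k j, MemLp (fun ω => S ω k j) 2 P) (i j : n) :
    Integrable (fun ω => ((S ω)ᵀ * S ω) i j) P :=
  integrable_finsetSum _ fun k _ => (hS k i).integrable_mul (hS k j)

variable [Fintype n]

lemma memLp_two_apply_of_integrable_sum_sq {A : Ω → Matrix m n ℝ}
    (hmeas : ∀ k p, Measurable fun ω => A ω k p)
    (hint : Integrable (fun ω => ∑ k, ∑ p, A ω k p ^ 2) P) (k : m) (p : n) :
    MemLp (fun ω => A ω k p) 2 P := by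
  refine (memLp_two_iff_integrable_sq (hmeas k p).aestronglyMeasurable).mpr <|
    hint.mono' ((hmeas k p).pow_const 2).aestronglyMeasurable (ae_of_all _ fun ω => ?_)
  calc ‖A ω k p ^ 2‖ = A ω k p ^ 2 := Real.norm_of_nonneg (sq_nonneg _)
    _ ≤ ∑ p', A ω k p' ^ 2 := Finset.single_le_sum (fun _ _ => sq_nonneg _) (Finset.mem_univ p)
    _ ≤ ∑ k', ∑ p', A ω k' p' ^ 2 :=
      Finset.single_le_sum (f := fun k' => ∑ p', A ω k' p' ^ 2)
        (fun _ _ => Finset.sum_nonneg fun _ _ => sq_nonneg _) (Finset.mem_univ k)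

lemma posSemidef_entrywiseIntegral_transpose_mul_self {S : Ω → Matrix m n ℝ}
    (hS : ∀ k j, MemLp (fun ω => S ω k j) 2 P) :
    (entrywiseIntegral P fun ω => (S ω)ᵀ * S ω).PosSemidef :=
  .entrywiseIntegral (fun ω => by simpa using posSemidef_conjTranspose_mul_self (S ω))
    (integrable_transpose_mul_self_apply hS)

lemma integral_sub_mulVec_dotProduct_self [IsProbabilityMeasure P] {S : Ω → Matrix m n ℝ}
    (hS : ∀ k j, MemLp (fun ω => S ω k j) 2 P) (c : m → ℝ) (x : n → ℝ) :
    ∫ ω, (c - S ω *ᵥ x) ⬝ᵥ (c - S ω *ᵥ x) ∂P =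
      c ⬝ᵥ c + quadraticPotential (entrywiseIntegral P fun ω => (S ω)ᵀ * S ω)
        (entrywiseIntegral P (fun ω => (S ω)ᵀ) *ᵥ c) x := by
  have hSt : ∀ j k, Integrable (fun ω => (S ω)ᵀ j k) P := fun j k =>
    (hS k j).integrable one_le_two
  have hStS := integrable_transpose_mul_self_apply hS
  have pointwise : ∀ ω, (c - S ω *ᵥ x) ⬝ᵥ (c - S ω *ᵥ x) =
      c ⬝ᵥ c + (x ⬝ᵥ ((S ω)ᵀ * S ω) *ᵥ x - 2 * (x ⬝ᵥ (S ω)ᵀ *ᵥ c)) := by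
    intro ω
    rw [← mulVec_mulVec, dotProduct_transpose_mulVec, dotProduct_transpose_mulVec]
    simp only [sub_dotProduct, dotProduct_sub, dotProduct_comm c]
    ring
  have hquad := integrable_dotProduct_mulVec hStS x x
  have hlin := (integrable_dotProduct_mulVec hSt x c).const_mul 2
  simp_rw [pointwise]
  rw [integral_add (integrable_const _) (hquad.sub' hlin), integral_sub hquad hlin,
    integral_const, integral_const_mul, integral_dotProduct_mulVec hStS,
    integral_dotProduct_mulVec hSt, quadraticPotential, probReal_univ, one_smul]

end SecondMoments

theorem static_quadratic_nash_unique_general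
    {Ω : Type*} [MeasurableSpace Ω] (P : Measure Ω) [IsProbabilityMeasure P]
    (N dy dz : ℕ)
    (γ : Fin N → ℝ) (hγ : ∀ i, 0 < γ i)
    (w : Fin N → ℝ) (c : Fin dy → ℝ)
    (Z : Fin N → Ω → Matrix (Fin dy) (Fin dz) ℝ)
    (hZmeas : ∀ i k p, Measurable fun ω => Z i ω k p)
    (hZint : ∀ i, Integrable (fun ω => ∑ k, ∑ p, (Z i ω k p) ^ 2) P)
    (J : (Fin N → Fin dz → ℝ) → Fin N → ℝ)
    (hJ : ∀ β i, J β i =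
      (∫ ω, ∑ k, (c k - ∑ j, w j * ((Z j ω) *ᵥ (β j)) k) ^ 2 ∂P) +
        γ i * ∑ p, (β i p) ^ 2)
    (M : Matrix (Fin N × Fin dz) (Fin N × Fin dz) ℝ)
    (hM : M = Matrix.diagonal (fun ip => γ ip.1) +
      Matrix.of (fun ip jq =>
        ∫ ω, ∑ k, (w ip.1 * Z ip.1 ω k ip.2) * (w jq.1 * Z jq.1 ω k jq.2) ∂P))
    (ESt : Matrix (Fin N × Fin dz) (Fin dy) ℝ)
    (hESt : ESt = Matrix.of (fun ip k => ∫ ω, w ip.1 * Z ip.1 ω k ip.2 ∂P)) :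
    M.PosDef ∧
    (∃! β : Fin N → Fin dz → ℝ,
      ∀ i, ∀ b : Fin dz → ℝ, J β i ≤ J (Function.update β i b) i) ∧
    (∀ β : Fin N → Fin dz → ℝ,
      (∀ i, ∀ b : Fin dz → ℝ, J β i ≤ J (Function.update β i b) i) →
      (fun ip : Fin N × Fin dz => β ip.1 ip.2) = M⁻¹ *ᵥ (ESt *ᵥ c)) := by
  set S : Ω → Matrix (Fin dy) (Fin N × Fin dz) ℝ :=
    fun ω => of fun k ip => w ip.1 * Z ip.1 ω k ip.2
  have hS : ∀ k ip, MemLp (fun ω => S ω k ip) 2 P := fun k ip =>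
    (memLp_two_apply_of_integrable_sum_sq (hZmeas ip.1) (hZint ip.1) k ip.2).const_mul (w ip.1)
  have hM' : M = diagonal (fun ip => γ ip.1) + entrywiseIntegral P fun ω => (S ω)ᵀ * S ω := hM
  have hESt' : ESt = entrywiseIntegral P fun ω => (S ω)ᵀ := hESt
  have hJ' : ∀ β i, J β i = c ⬝ᵥ c + quadraticPotential (entrywiseIntegral P fun ω => (S ω)ᵀ * S ω)
      (ESt *ᵥ c) (Function.uncurry β) + γ i * (β i ⬝ᵥ β i) := by
    intro β i
    have hSβ : ∀ ω, S ω *ᵥ Function.uncurry β = fun k => ∑ j, w j * (Z j ω *ᵥ β j) k := by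
      intro ω
      ext k
      simp only [S, mulVec, dotProduct, Fintype.sum_prod_type, of_apply,
        Function.uncurry_apply_pair, Finset.mul_sum, mul_assoc]
    rw [hJ, hESt', ← integral_sub_mulVec_dotProduct_self hS]
    simp only [hSβ, dotProduct, Pi.sub_apply, sq]
  have hMpos : M.PosDef := hM' ▸ (PosDef.diagonal fun ip => hγ ip.1).add_posSemidef
    (posSemidef_entrywiseIntegral_transpose_mul_self hS)
  have hNash : ∀ β, IsNashEquilibrium J β ↔ Function.uncurry β = M⁻¹ *ᵥ (ESt *ᵥ c) := by
    intro β
    rw [← mulVec_eq_iff_eq_inv_mulVec hMpos.isUnit]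
    rw [hM'] at hMpos ⊢
    exact (isExactPotential_of_eq_add_regularizer _ _ γ _ hJ').isNashEquilibrium_iff
      hMpos.posSemidef β
  refine ⟨hMpos, ⟨Function.curry _, (hNash _).mpr (Function.uncurry_curry _), fun β hβ => ?_⟩,
    fun β hβ => (hNash β).mp hβ⟩
  rw [← (hNash β).mp hβ, Function.curry_uncurry]

/-- **The static quadratic Nash game among `N` proprietary agents has a unique Nash
equilibrium in closed form.**  Player `i`'s cost is
`J_i(β) = E[‖c − Σ_j wʲ Zʲ βʲ‖²] + γ_i ‖βⁱ‖²`.  With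
`S = [w¹Z¹, …, wᴺZᴺ]` and `Γ = diag(γ_1 I, …, γ_N I)`, the matrix `Γ + E[SᵀS]` is
symmetric positive definite (hence invertible), there is exactly one Nash
equilibrium `β*`, and the stack of its blocks equals `(Γ + E[SᵀS])⁻¹ E[S]ᵀ c`. -/
theorem static_quadratic_nash_unique
    {Ω : Type*} [MeasurableSpace Ω] (P : Measure Ω) [IsProbabilityMeasure P]
    (N dy dz : ℕ) (hN : 1 ≤ N) (hdy : 1 ≤ dy) (hdz : 1 ≤ dz)
    (γ : Fin N → ℝ) (hγ : ∀ i, 0 < γ i)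
    (w : Fin N → ℝ) (c : Fin dy → ℝ)
    (Z : Fin N → Ω → Matrix (Fin dy) (Fin dz) ℝ)
    (hZmeas : ∀ i k p, Measurable fun ω => Z i ω k p)
    (hZint : ∀ i, Integrable (fun ω => ∑ k, ∑ p, (Z i ω k p) ^ 2) P)
    (J : (Fin N → Fin dz → ℝ) → Fin N → ℝ)
    (hJ : ∀ β i, J β i =
      (∫ ω, ∑ k, (c k - ∑ j, w j * ((Z j ω) *ᵥ (β j)) k) ^ 2 ∂P) +
        γ i * ∑ p, (β i p) ^ 2)
    (M : Matrix (Fin N × Fin dz) (Fin N × Fin dz) ℝ)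
    (hM : M = Matrix.diagonal (fun ip => γ ip.1) +
      Matrix.of (fun ip jq =>
        ∫ ω, ∑ k, (w ip.1 * Z ip.1 ω k ip.2) * (w jq.1 * Z jq.1 ω k jq.2) ∂P))
    (ESt : Matrix (Fin N × Fin dz) (Fin dy) ℝ)
    (hESt : ESt = Matrix.of (fun ip k => ∫ ω, w ip.1 * Z ip.1 ω k ip.2 ∂P)) :
    M.PosDef ∧
    (∃! β : Fin N → Fin dz → ℝ,
      ∀ i, ∀ b : Fin dz → ℝ, J β i ≤ J (Function.update β i b) i) ∧
    (∀ β : Fin N → Fin dz → ℝ,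
      (∀ i, ∀ b : Fin dz → ℝ, J β i ≤ J (Function.update β i b) i) →
      (fun ip : Fin N × Fin dz => β ip.1 ip.2) = M⁻¹ *ᵥ (ESt *ᵥ c)) :=
  static_quadratic_nash_unique_general P N dy dz γ hγ w c Z hZmeas hZint J hJ M hM ESt hESt
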